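/- Let G be a directed graph whose underlying undirected graph is connected, let r be a vertex, and suppose every vertex of G can reach r and can be reached from r. If M is an edge-minimal spanning subgraph of G in which every vertex can reach r and can be reached from r, then M is the union of an in-arborescence rooted at r and an out-arborescence rooted at r (i.e., M = A_in ∪ A_out where in A_in every vertex has a directed path to r and in A_out every vertex has a directed path from r, and A_in, A_out are arborescences). -/

import Mathlib

/-- `A` is an in-arborescence rooted at `r`: every vertex has a directed path
to `r`, the root has no outgoing edge, and every vertex has at most one
outgoing edge (hence the path to the root is unique). -/
def IsInArborescence {V : Type} (A : V → V → Prop) (r : V) : Prop :=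
  (∀ v, Relation.ReflTransGen A v r) ∧
  (∀ v, ¬ A r v) ∧
  (∀ u v v', A u v → A u v' → v = v')

/-- `A` is an out-arborescence rooted at `r`: every vertex has a directed path
from `r`, the root has no incoming edge, and every vertex has at most one
incoming edge (hence the path from the root is unique). -/
def IsOutArborescence {V : Type} (A : V → V → Prop) (r : V) : Prop :=
  (∀ v, Relation.ReflTransGen A r v) ∧
  (∀ u, ¬ A u r) ∧
  (∀ u u' v, A u v → A u' v → u = u')

open Relation

private def powRel {V : Type} (M : V → V → Prop) : ℕ → V → V → Prop
  | 0, a, b => a = b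
  | n+1, a, b => ∃ c, M a c ∧ powRel M n c b

private lemma rtg_iff_pow {V : Type} (M : V → V → Prop) (a b : V) :
    ReflTransGen M a b ↔ ∃ n, powRel M n a b := by
  constructor
  · intro h
    induction h using ReflTransGen.head_induction_on with
    | refl => exact ⟨0, rfl⟩
    | head h _ ih => obtain ⟨n, hn⟩ := ih; exact ⟨n+1, _, h, hn⟩
  · rintro ⟨n, hn⟩
    induction n generalizing a with
    | zero => exact hn ▸ ReflTransGen.refl
    | succ n ih =>
      obtain ⟨c, h1, h2⟩ := hn
      exact ReflTransGen.head h1 (ih c h2)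

private lemma exists_inTree {V : Type} (M : V → V → Prop) (r : V)
    (h : ∀ v, ReflTransGen M v r) :
    ∃ c : V → V, (∀ v, v ≠ r → M v (c v)) ∧
      ∀ v, ReflTransGen (fun u w => u ≠ r ∧ w = c u) v r := by
  classical
  have ex : ∀ v, ∃ n, powRel M n v r := fun v => (rtg_iff_pow M v r).1 (h v)
  set d : V → ℕ := fun v => Nat.find (ex v) with hdef
  have hd : ∀ v, powRel M (d v) v r := fun v => Nat.find_spec (ex v)
  have hd0 : ∀ v, d v = 0 → v = r := by
    intro v h0
    have := hd v
    rw [h0] at this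
    exact this
  have key : ∀ v, v ≠ r → ∃ c, M v c ∧ d c < d v := by
    intro v hv
    have hdv : d v ≠ 0 := fun h0 => hv (hd0 v h0)
    obtain ⟨m, hm⟩ := Nat.exists_eq_succ_of_ne_zero hdv
    have hp := hd v
    rw [hm] at hp
    obtain ⟨c, h1, h2⟩ := hp
    have hle : d c ≤ m := Nat.find_le h2
    exact ⟨c, h1, by omega⟩
  set c : V → V := fun v => if hv : v = r then v else (key v hv).choose with hc
  have hc1 : ∀ v (hv : v ≠ r), M v (c v) := by
    intro v hv; simp only [hc, dif_neg hv]; exact (key v hv).choose_spec.1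
  have hc2 : ∀ v (hv : v ≠ r), d (c v) < d v := by
    intro v hv; simp only [hc, dif_neg hv]; exact (key v hv).choose_spec.2
  refine ⟨c, hc1, ?_⟩
  have main : ∀ n v, d v ≤ n → ReflTransGen (fun u w => u ≠ r ∧ w = c u) v r := by
    intro n
    induction n with
    | zero =>
      intro v hv
      have : v = r := hd0 v (Nat.le_zero.mp hv)
      exact this ▸ ReflTransGen.refl
    | succ n ih =>
      intro v hv
      by_cases hvr : v = r
      · exact hvr ▸ ReflTransGen.refl
      · have := hc2 v hvr
        exact ReflTransGen.head ⟨hvr, rfl⟩ (ih (c v) (by omega))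
  exact fun v => main (d v) v le_rfl

/-- Let `G` be a directed graph whose underlying undirected graph is connected,
with a vertex `r` such that every vertex reaches `r` and is reached from `r`.
If `M` is an edge-minimal spanning subgraph of `G` in which every vertex can
reach `r` and can be reached from `r`, then `M` is the union of an
in-arborescence and an out-arborescence, both rooted at `r`. -/
theorem minimal_strongly_connected_eq_union_arborescences {V : Type} [Finite V]
    (G : V → V → Prop) (r : V)
    (hconn : (SimpleGraph.fromRel G).Connected)
    (hstrong : ∀ v, Relation.ReflTransGen G r v ∧ Relation.ReflTransGen G v r)
    (M : V → V → Prop)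
    (hsub : ∀ u v, M u v → G u v)
    (hM : ∀ v, Relation.ReflTransGen M r v ∧ Relation.ReflTransGen M v r)
    (hmin : ∀ u v, M u v → ∃ x,
      ¬ Relation.ReflTransGen (fun a b => M a b ∧ ¬(a = u ∧ b = v)) r x ∨
      ¬ Relation.ReflTransGen (fun a b => M a b ∧ ¬(a = u ∧ b = v)) x r) :
    ∃ Ain Aout : V → V → Prop,
      IsInArborescence Ain r ∧ IsOutArborescence Aout r ∧
      (∀ u v, M u v ↔ Ain u v ∨ Aout u v) := by
  classical
  obtain ⟨c, hc1, hc2⟩ := exists_inTree M r (fun v => (hM v).2)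
  obtain ⟨p, hp1, hp2⟩ := exists_inTree (Function.swap M) r
    (fun v => (Relation.reflTransGen_swap).2 (hM v).1)
  set Ain : V → V → Prop := fun u w => u ≠ r ∧ w = c u with hAin
  set Aout : V → V → Prop := fun u w => w ≠ r ∧ u = p w with hAout
  have hAinM : ∀ u v, Ain u v → M u v := by
    rintro u v ⟨hu, rfl⟩; exact hc1 u hu
  have hAoutM : ∀ u v, Aout u v → M u v := by
    rintro u v ⟨hv, rfl⟩; exact hp1 v hv
  have hAoutReach : ∀ v, Relation.ReflTransGen Aout r v := by
    intro v
    have := hp2 v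
    have hs : Relation.ReflTransGen (Function.swap Aout) v r := by
      refine Relation.ReflTransGen.mono ?_ _ _ this
      rintro a b ⟨ha, hb⟩; exact ⟨ha, hb⟩
    exact Relation.reflTransGen_swap.1 hs
  refine ⟨Ain, Aout, ⟨hc2, ?_, ?_⟩, ⟨hAoutReach, ?_, ?_⟩, ?_⟩
  · rintro v ⟨h, _⟩; exact h rfl
  · rintro u v v' ⟨_, rfl⟩ ⟨_, rfl⟩; rfl
  · rintro u ⟨h, _⟩; exact h rfl
  · rintro u u' v ⟨_, rfl⟩ ⟨_, rfl⟩; rfl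
  · intro u v
    constructor
    · intro huv
      by_contra hnot
      push_neg at hnot
      obtain ⟨hnin, hnout⟩ := hnot
      obtain ⟨x, hx⟩ := hmin u v huv
      set M' : V → V → Prop := fun a b => M a b ∧ ¬(a = u ∧ b = v) with hM'
      have hinM' : ∀ a b, Ain a b → M' a b := by
        intro a b hab
        refine ⟨hAinM a b hab, ?_⟩
        rintro ⟨rfl, rfl⟩; exact hnin hab
      have houtM' : ∀ a b, Aout a b → M' a b := by
        intro a b hab
        refine ⟨hAoutM a b hab, ?_⟩
        rintro ⟨rfl, rfl⟩; exact hnout hab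
      rcases hx with hx | hx
      · exact hx (Relation.ReflTransGen.mono houtM' _ _ (hAoutReach x))
      · exact hx (Relation.ReflTransGen.mono hinM' _ _ (hc2 x))
    · rintro (h | h)
      · exact hAinM u v h
      · exact hAoutM u v h
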